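/- arXiv:2009.09864 — 4 statements merged into one kernel-verified Lean document; each statement's English description precedes it below -/
import Mathlib

section
/- Let A, G, C, Γ be n×n real matrices, B, D be n×m real matrices, Q a symmetric n×n real matrix, R a symmetric m×m real matrix, and set Q_Γ = ΓᵀQ + QΓ − ΓᵀQΓ. Let P, K : ℝ → (n×n real matrices) be differentiable functions with P(t) and K(t) symmetric and Υ(t) := R + DᵀP(t)D invertible for every t. Suppose that for all t: (a) Ṗ + AᵀP + PA + CᵀPC + Q − (BᵀP + DᵀPC)ᵀ Υ⁻¹ (BᵀP + DᵀPC) = 0, and (b) K̇ + (A+G)ᵀK + K(A+G) + GᵀP + PG − (BᵀP + DᵀPC)ᵀ Υ⁻¹ BᵀK − K B Υ⁻¹ (BᵀP + DᵀPC) − K B Υ⁻¹ BᵀK − Q_Γ = 0. Then Π := P + K satisfies, for all t, Π̇ + (A+G)ᵀΠ + Π(A+G) − (BᵀΠ + DᵀPC)ᵀ Υ⁻¹ (BᵀΠ + DᵀPC) + CᵀPC + Q − Q_Γ = 0. -/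
open Matrix

attribute [local instance] Matrix.normedAddCommGroup Matrix.normedSpace

/-- Remark 3.2 of the paper: if `P` solves the Riccati equation (8b) and `K` solves
the coupled Riccati equation (9b), then `Π = P + K` solves the Riccati equation (11)
(written with constant term `Q − Q_Γ = (I−Γ)ᵀQ(I−Γ)`). -/
theorem riccati_sum_solves_eq11
    {n m : ℕ}
    (A G C Γ : Matrix (Fin n) (Fin n) ℝ) (B D : Matrix (Fin n) (Fin m) ℝ)
    (Q : Matrix (Fin n) (Fin n) ℝ) (hQ : Qᵀ = Q)
    (R : Matrix (Fin m) (Fin m) ℝ) (hR : Rᵀ = R)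
    (QΓ : Matrix (Fin n) (Fin n) ℝ) (hQΓ : QΓ = Γᵀ * Q + Q * Γ - Γᵀ * Q * Γ)
    (P K P' K' : ℝ → Matrix (Fin n) (Fin n) ℝ)
    (hPsymm : ∀ t, (P t)ᵀ = P t) (hKsymm : ∀ t, (K t)ᵀ = K t)
    (Υ : ℝ → Matrix (Fin m) (Fin m) ℝ) (hΥ : ∀ t, Υ t = R + Dᵀ * P t * D)
    (hΥinv : ∀ t, IsUnit (Υ t))
    (hPderiv : ∀ t, HasDerivAt P (P' t) t)
    (hKderiv : ∀ t, HasDerivAt K (K' t) t)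
    (hPeq : ∀ t, P' t + Aᵀ * P t + P t * A + Cᵀ * P t * C + Q
        - (Bᵀ * P t + Dᵀ * P t * C)ᵀ * (Υ t)⁻¹ * (Bᵀ * P t + Dᵀ * P t * C) = 0)
    (hKeq : ∀ t, K' t + (A + G)ᵀ * K t + K t * (A + G) + Gᵀ * P t + P t * G
        - (Bᵀ * P t + Dᵀ * P t * C)ᵀ * (Υ t)⁻¹ * (Bᵀ * K t)
        - (K t * B) * (Υ t)⁻¹ * (Bᵀ * P t + Dᵀ * P t * C)
        - (K t * B) * (Υ t)⁻¹ * (Bᵀ * K t) - QΓ = 0) :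
    ∀ t, HasDerivAt (fun s => P s + K s) (P' t + K' t) t ∧
      P' t + K' t + (A + G)ᵀ * (P t + K t) + (P t + K t) * (A + G)
        - (Bᵀ * (P t + K t) + Dᵀ * P t * C)ᵀ * (Υ t)⁻¹
            * (Bᵀ * (P t + K t) + Dᵀ * P t * C)
        + Cᵀ * P t * C + Q - QΓ = 0 := by

  intro t
  refine ⟨(hPderiv t).add (hKderiv t), ?_⟩
  have h1 := hPeq t
  have h2 := hKeq t
  have key : P' t + K' t + (A + G)ᵀ * (P t + K t) + (P t + K t) * (A + G)
        - (Bᵀ * (P t + K t) + Dᵀ * P t * C)ᵀ * (Υ t)⁻¹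
            * (Bᵀ * (P t + K t) + Dᵀ * P t * C)
        + Cᵀ * P t * C + Q - QΓ
      = (P' t + Aᵀ * P t + P t * A + Cᵀ * P t * C + Q
        - (Bᵀ * P t + Dᵀ * P t * C)ᵀ * (Υ t)⁻¹ * (Bᵀ * P t + Dᵀ * P t * C))
      + (K' t + (A + G)ᵀ * K t + K t * (A + G) + Gᵀ * P t + P t * G
        - (Bᵀ * P t + Dᵀ * P t * C)ᵀ * (Υ t)⁻¹ * (Bᵀ * K t)
        - (K t * B) * (Υ t)⁻¹ * (Bᵀ * P t + Dᵀ * P t * C)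
        - (K t * B) * (Υ t)⁻¹ * (Bᵀ * K t) - QΓ) := by
    simp only [Matrix.transpose_add, Matrix.transpose_mul, Matrix.transpose_transpose,
      hPsymm, hKsymm, Matrix.mul_add, Matrix.add_mul, Matrix.mul_sub, Matrix.sub_mul]
    abel
  rw [key, h1, h2, add_zero]
end

section
/- Let r < 0 be a real number, set T_max = (1/2)·ln((1 + r²)/r²), and let 0 < T < T_max. Define P(t) = √(e^{−2(T−t)}(1 + r²) − r²) − r for t ∈ [0, T]. Then P(T) = 1 − r, P(t) + r > 0 for every t ∈ [0, T], and P is differentiable on [0, T] with Ṗ(t) − 2r − P(t)²/(P(t) + r) = 0 for every t ∈ [0, T]. -/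
/-! With `s = P + r` the equation reads `s ṡ = s² + r²`, i.e. `(s²)' = 2 (s² + r²)`, which is
solved by `s² = e^{-2(T-t)}(1 + r²) - r²`; the terminal condition `s(T) = 1` fixes the constant.
The horizon bound `T < T_max` is exactly what keeps this radicand positive down to `t = 0`. -/

open Real

lemma lt_exp_neg_two_mul_mul_of_lt_half_log_div {a b T : ℝ} (ha : 0 < a) (hb : 0 < b)
    (hT : T < 1 / 2 * log (a / b)) : b < exp (-2 * T) * a := by
  have hexp : exp (2 * T) < a / b := (lt_log_iff_exp_lt (div_pos ha hb)).1 (by linarith)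
  have hb' : b * exp (2 * T) < a := by rwa [lt_div_iff₀ hb, mul_comm] at hexp
  calc b = exp (-2 * T) * (b * exp (2 * T)) := by
        rw [mul_left_comm, ← exp_add]; simp
    _ < exp (-2 * T) * a := by gcongr

lemma exp_neg_two_mul_sub_mul_sub_pos {a b T t : ℝ} (ha : 0 < a) (hb : 0 < b)
    (hT : T < 1 / 2 * log (a / b)) (ht : 0 ≤ t) : 0 < exp (-2 * (T - t)) * a - b := by
  have hmono : exp (-2 * T) * a ≤ exp (-2 * (T - t)) * a := by
    gcongr exp ?_ * a; linarith
  linarith [lt_exp_neg_two_mul_mul_of_lt_half_log_div ha hb hT]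

lemma hasDerivAt_sqrt_exp_neg_two_mul_sub_mul_sub {a b T t : ℝ}
    (hpos : exp (-2 * (T - t)) * a - b ≠ 0) :
    HasDerivAt (fun u => √(exp (-2 * (T - u)) * a - b))
      (exp (-2 * (T - t)) * a / √(exp (-2 * (T - t)) * a - b)) t := by
  have hlin : HasDerivAt (fun u : ℝ => -2 * (T - u)) 2 t := by
    simpa using ((hasDerivAt_id t).const_sub T).const_mul (-2 : ℝ)
  convert ((hlin.exp.mul_const a).sub_const b).sqrt hpos using 1
  field_simp

theorem scalar_riccati_explicit_solution_general
    (r : ℝ) (hr : r < 0)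
    (Tmax : ℝ) (hTmax : Tmax = (1 / 2) * Real.log ((1 + r ^ 2) / r ^ 2))
    (T : ℝ) (hTmax' : T < Tmax)
    (P : ℝ → ℝ)
    (hP : ∀ t : ℝ,
      P t = Real.sqrt (Real.exp (-2 * (T - t)) * (1 + r ^ 2) - r ^ 2) - r) :
    P T = 1 - r ∧
      ∀ t ∈ Set.Icc (0 : ℝ) T,
        0 < P t + r ∧ HasDerivAt P (2 * r + P t ^ 2 / (P t + r)) t := by
  refine ⟨by simp [hP], fun t ⟨ht0, _⟩ => ?_⟩
  set q := exp (-2 * (T - t)) * (1 + r ^ 2) - r ^ 2 with hq_def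
  have hq : 0 < q := exp_neg_two_mul_sub_mul_sub_pos (by positivity) (sq_pos_of_neg hr)
    (hTmax ▸ hTmax') ht0
  have hs : 0 < √q := sqrt_pos.2 hq
  have hPr : P t + r = √q := by rw [hP]; ring
  refine ⟨hPr ▸ hs, ?_⟩
  -- with `s = √q`: `e^{-2(T-t)}(1 + r²) = s² + r² = 2 r s + (s - r)²`
  have hslope : 2 * r + P t ^ 2 / (P t + r) = exp (-2 * (T - t)) * (1 + r ^ 2) / √q := by
    rw [hPr, hP, ← hq_def, show exp (-2 * (T - t)) * (1 + r ^ 2) = √q ^ 2 + r ^ 2 by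
      rw [sq_sqrt hq.le]; ring]
    field_simp
    ring
  rw [hslope, show P = _ from funext hP]
  exact (hasDerivAt_sqrt_exp_neg_two_mul_sub_mul_sub hq.ne').sub_const r

/-- Example 1 of the paper: for `r < 0` and horizon `0 < T < T_max`, the function
`P(t) = √(e^{−2(T−t)}(1 + r²) − r²) − r` satisfies `P(T) = 1 − r`, `P(t) + r > 0`
on `[0, T]`, and solves the scalar Riccati equation
`Ṗ(t) − 2r − P(t)²/(P(t) + r) = 0` on `[0, T]`. -/
theorem scalar_riccati_explicit_solution
    (r : ℝ) (hr : r < 0)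
    (Tmax : ℝ) (hTmax : Tmax = (1 / 2) * Real.log ((1 + r ^ 2) / r ^ 2))
    (T : ℝ) (hT0 : 0 < T) (hTmax' : T < Tmax)
    (P : ℝ → ℝ)
    (hP : ∀ t : ℝ,
      P t = Real.sqrt (Real.exp (-2 * (T - t)) * (1 + r ^ 2) - r ^ 2) - r) :
    P T = 1 - r ∧
      ∀ t ∈ Set.Icc (0 : ℝ) T,
        0 < P t + r ∧ HasDerivAt P (2 * r + P t ^ 2 / (P t + r)) t :=
  scalar_riccati_explicit_solution_general r hr Tmax hTmax T hTmax' P hP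
end

section
/- Let n ≥ 1, h > 0, let R be a symmetric invertible n×n real matrix, let T̂ > 0, and let I denote the n×n identity matrix. Suppose Y : [0, T̂) → (n×n real matrices) is differentiable and for every t ∈ [0, T̂): Y(t) is symmetric positive definite, Y(t)·R = R·Y(t), and Y(t)² = e^{−2t}·(h²·I + R²) − R². Then Y(0) = h·I and, for every t ∈ [0, T̂), Y′(t) = −Y(t) − R·Y(t)⁻¹·R. -/
/-!
Differentiating `Y(t)² = e^{-2t}(h²I + R²) - R²` gives the Lyapunov equation
`Y Ẏ + Ẏ Y = -2 (Y² + R²)`. Because `Y` commutes with `R`, the matrix `-Y - R Y⁻¹ R` solves the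
same equation, and for positive definite `Y` the map `X ↦ Y X + X Y` is injective: in an
eigenbasis of `Y` it multiplies the `(i, j)` entry by `λᵢ + λⱼ > 0`. The same injectivity gives
uniqueness of positive square roots, hence `Y(0) = hI`.
-/

open Matrix

attribute [local instance] Matrix.normedAddCommGroup Matrix.normedSpace

theorem HasDerivWithinAt.matrix_mul {𝕜 : Type*} [NontriviallyNormedField 𝕜] [CompleteSpace 𝕜]
    {l m n : Type*} [Fintype l] [Fintype m] [Fintype n]
    {A : 𝕜 → Matrix l m 𝕜} {B : 𝕜 → Matrix m n 𝕜} {A' : Matrix l m 𝕜} {B' : Matrix m n 𝕜}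
    {s : Set 𝕜} {x : 𝕜} (hA : HasDerivWithinAt A A' s x) (hB : HasDerivWithinAt B B' s x) :
    HasDerivWithinAt (fun y => A y * B y) (A' * B x + A x * B') s x := by
  let mul : Matrix l m 𝕜 →L[𝕜] Matrix m n 𝕜 →L[𝕜] Matrix l n 𝕜 :=
    LinearMap.toContinuousLinearMap
      (LinearMap.toContinuousLinearMap.toLinearMap ∘ₗ mulLinearMap 𝕜)
  exact (mul.hasDerivWithinAt_of_bilinear hA hB).congr_deriv (add_comm _ _)

namespace Matrix

open scoped ComplexOrder

variable {n 𝕜 : Type*} [Fintype n] [DecidableEq n] [RCLike 𝕜] {A X X' : Matrix n n 𝕜}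

theorem PosDef.eq_zero_of_mul_add_mul_eq_zero (hA : A.PosDef) (h : A * X + X * A = 0) :
    X = 0 := by
  let φ := Unitary.conjStarAlgAut 𝕜 (Matrix n n 𝕜) (star hA.1.eigenvectorUnitary)
  have hdiag : φ A = diagonal (RCLike.ofReal ∘ hA.1.eigenvalues) :=
    hA.1.conjStarAlgAut_star_eigenvectorUnitary
  have hφX : diagonal (RCLike.ofReal ∘ hA.1.eigenvalues) * φ X
      + φ X * diagonal (RCLike.ofReal ∘ hA.1.eigenvalues) = 0 := by
    rw [← hdiag, ← map_mul, ← map_mul, ← map_add, h, map_zero]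
  suffices φ X = 0 from (map_eq_zero_iff φ φ.injective).mp this
  ext i j
  have hij := congr_fun₂ hφX i j
  simp only [diagonal_mul, mul_diagonal, add_apply, zero_apply, Function.comp_apply] at hij
  have hpos : (0 : ℝ) < hA.1.eigenvalues i + hA.1.eigenvalues j :=
    add_pos (hA.eigenvalues_pos i) (hA.eigenvalues_pos j)
  have : ((hA.1.eigenvalues i + hA.1.eigenvalues j : ℝ) : 𝕜) * φ X i j = 0 := by
    push_cast; linear_combination hij
  exact (mul_eq_zero.mp this).resolve_left (mod_cast hpos.ne')

theorem PosDef.eq_of_mul_add_mul_eq (hA : A.PosDef)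
    (h : A * X + X * A = A * X' + X' * A) : X = X' :=
  sub_eq_zero.mp <| hA.eq_zero_of_mul_add_mul_eq_zero <| by
    rw [mul_sub, sub_mul, sub_add_sub_comm, h, sub_self]

theorem PosDef.eq_of_sq_eq_sq {B : Matrix n n 𝕜} (hA : A.PosDef) (hB : B.PosSemidef)
    (h : A ^ 2 = B ^ 2) : A = B :=
  (hA.add_posSemidef hB).eq_of_mul_add_mul_eq <| by
    simp only [sq] at h
    noncomm_ring
    rw [h]
    abel

theorem mul_add_mul_neg_sub_mul_inv_mul {R : Matrix n n 𝕜} (hA : IsUnit A)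
    (hAR : Commute A R) :
    A * (-A - R * A⁻¹ * R) + (-A - R * A⁻¹ * R) * A = (-2 : 𝕜) • (A ^ 2 + R ^ 2) := by
  rw [isUnit_iff_isUnit_det] at hA
  have h₁ : A * (R * A⁻¹ * R) = R ^ 2 := by
    rw [← mul_assoc, ← mul_assoc, hAR.eq, mul_assoc R, mul_nonsing_inv A hA, mul_one, sq]
  have h₂ : R * A⁻¹ * R * A = R ^ 2 := by
    rw [mul_assoc, hAR.symm.eq, ← mul_assoc, mul_assoc R, nonsing_inv_mul A hA, mul_one, sq]
  rw [mul_sub, sub_mul, mul_neg, neg_mul, h₁, h₂, sq A]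
  module

end Matrix

theorem matrix_sqrt_solves_ode_general
    {n : ℕ} (h : ℝ) (hh : 0 < h)
    (R : Matrix (Fin n) (Fin n) ℝ)
    (That : ℝ) (hThat : 0 < That)
    (Y : ℝ → Matrix (Fin n) (Fin n) ℝ)
    (hYdiff : ∀ t ∈ Set.Ico (0 : ℝ) That, DifferentiableAt ℝ Y t)
    (hYpos : ∀ t ∈ Set.Ico (0 : ℝ) That, (Y t).PosDef)
    (hYcomm : ∀ t ∈ Set.Ico (0 : ℝ) That, Y t * R = R * Y t)
    (hYsq : ∀ t ∈ Set.Ico (0 : ℝ) That,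
      Y t ^ 2 = Real.exp (-2 * t) • (h ^ 2 • (1 : Matrix (Fin n) (Fin n) ℝ) + R ^ 2)
        - R ^ 2) :
    Y 0 = h • (1 : Matrix (Fin n) (Fin n) ℝ) ∧
      ∀ t ∈ Set.Ico (0 : ℝ) That,
        deriv Y t = -Y t - R * (Y t)⁻¹ * R := by
  refine ⟨(hYpos 0 ⟨le_rfl, hThat⟩).eq_of_sq_eq_sq (PosSemidef.one.smul hh.le) ?_, fun t ht => ?_⟩
  · simpa [smul_pow] using hYsq 0 ⟨le_rfl, hThat⟩
  set C := h ^ 2 • (1 : Matrix (Fin n) (Fin n) ℝ) + R ^ 2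
  have hY : HasDerivWithinAt Y (deriv Y t) (Set.Ico 0 That) t :=
    (hYdiff t ht).hasDerivAt.hasDerivWithinAt
  have hRHS : HasDerivWithinAt (fun s => Y s * Y s) ((-2 : ℝ) • (Y t ^ 2 + R ^ 2))
      (Set.Ico 0 That) t := by
    have hexp : HasDerivAt (fun s => Real.exp (-2 * s) • C - R ^ 2)
        ((Real.exp (-2 * t) * -2) • C) t :=
      ((hasDerivAt_const_mul (-2)).exp.smul_const C).sub_const _
    refine (hexp.hasDerivWithinAt.congr (fun s hs => (sq (Y s)).symm.trans (hYsq s hs))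
      ((sq (Y t)).symm.trans (hYsq t ht))).congr_deriv ?_
    rw [hYsq t ht, sub_add_cancel, smul_smul, mul_comm]
  have hlyap := (uniqueDiffOn_Ico 0 That t ht).eq_deriv _ (hY.matrix_mul hY) hRHS
  refine (hYpos t ht).eq_of_mul_add_mul_eq ?_
  rw [mul_add_mul_neg_sub_mul_inv_mul (hYpos t ht).isUnit (hYcomm t ht), ← hlyap, add_comm]

/-- Example 2 of the paper: the positive definite symmetric matrix function `Y` with
`Y(t)² = e^{−2t}(h²I + R²) − R²` and `Y(t)R = RY(t)` satisfies `Y(0) = hI` and solves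
the matrix ODE `Y′(t) = −Y(t) − R Y(t)⁻¹ R` on `[0, T̂)`. -/
theorem matrix_sqrt_solves_ode
    {n : ℕ} (hn : 1 ≤ n) (h : ℝ) (hh : 0 < h)
    (R : Matrix (Fin n) (Fin n) ℝ) (hRsymm : Rᵀ = R) (hRinv : IsUnit R)
    (That : ℝ) (hThat : 0 < That)
    (Y : ℝ → Matrix (Fin n) (Fin n) ℝ)
    (hYdiff : ∀ t ∈ Set.Ico (0 : ℝ) That, DifferentiableAt ℝ Y t)
    (hYpos : ∀ t ∈ Set.Ico (0 : ℝ) That, (Y t).PosDef)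
    (hYcomm : ∀ t ∈ Set.Ico (0 : ℝ) That, Y t * R = R * Y t)
    (hYsq : ∀ t ∈ Set.Ico (0 : ℝ) That,
      Y t ^ 2 = Real.exp (-2 * t) • (h ^ 2 • (1 : Matrix (Fin n) (Fin n) ℝ) + R ^ 2)
        - R ^ 2) :
    Y 0 = h • (1 : Matrix (Fin n) (Fin n) ℝ) ∧
      ∀ t ∈ Set.Ico (0 : ℝ) That,
        deriv Y t = -Y t - R * (Y t)⁻¹ * R :=
  matrix_sqrt_solves_ode_general h hh R That hThat Y hYdiff hYpos hYcomm hYsq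
end

section
/- Let M be an n×n real matrix with constants c > 0, λ > 0 such that ‖exp(tM)‖ ≤ c·e^{−λt} for all t ≥ 0, and let h : [0, ∞) → ℝⁿ be continuous with ∫₀^∞ ‖h(t)‖² dt < ∞. Then for every t ≥ 0 the integral s(t) = ∫_t^∞ exp((τ − t)·Mᵀ)·h(τ) dτ converges absolutely, the resulting function s satisfies ∫₀^∞ ‖s(t)‖² dt < ∞, and s is differentiable on [0, ∞) with ṡ(t) + Mᵀ·s(t) + h(t) = 0 for every t ≥ 0. -/
/-!
Put `k(x) = e^{-λx}`. Passing to the transpose costs a factor `n` in the `ℓ^∞` operator norm, so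
`‖e^{(τ-t)Mᵀ} h(τ)‖ ≤ n c k(τ - t) ‖h(τ)‖`. Cauchy–Schwarz against the weight `k(· - t)` gives
`(∫_t^∞ k(τ-t) ‖h(τ)‖ dτ)² ≤ ‖k‖₁ ∫_t^∞ k(τ-t) ‖h(τ)‖² dτ`: the right-hand side is finite for each
`t` (as `k ≤ 1`), and integrating it over `t` (Tonelli) bounds `‖s‖₂²` by `(n c ‖k‖₁)² ‖h‖₂²`.
For the equation, write `s(t) = e^{-tMᵀ} ∫_t^∞ e^{τMᵀ} h(τ) dτ` and use the product rule together
with the fundamental theorem of calculus for the tail integral.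
-/

open Matrix MeasureTheory

attribute [local instance] Matrix.linftyOpNormedAddCommGroup
  Matrix.linftyOpNormedRing Matrix.linftyOpNormedAlgebra

open Set
open scoped ENNReal

namespace Matrix

variable {m n α : Type*} [Fintype m] [Fintype n] [NormedAddCommGroup α]

lemma nnnorm_apply_le_linfty_opNNNorm (A : Matrix m n α) (i : m) (j : n) :
    ‖A i j‖₊ ≤ ‖A‖₊ := by
  rw [linfty_opNNNorm_def]
  exact (Finset.single_le_sum (fun _ _ => zero_le) (Finset.mem_univ j)).trans
    (Finset.le_sup (f := fun i => ∑ j, ‖A i j‖₊) (Finset.mem_univ i))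

lemma linfty_opNNNorm_transpose_le (A : Matrix m n α) :
    ‖Aᵀ‖₊ ≤ Fintype.card m * ‖A‖₊ := by
  rw [linfty_opNNNorm_def]
  refine Finset.sup_le fun j _ => ?_
  calc ∑ i, ‖Aᵀ j i‖₊ ≤ ∑ _i : m, ‖A‖₊ :=
        Finset.sum_le_sum fun i _ => A.nnnorm_apply_le_linfty_opNNNorm i j
    _ = Fintype.card m * ‖A‖₊ := by simp

lemma linfty_opNorm_transpose_le (A : Matrix m n α) : ‖Aᵀ‖ ≤ Fintype.card m * ‖A‖ := by
  exact_mod_cast A.linfty_opNNNorm_transpose_le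

end Matrix

lemma ofReal_sq_norm {E : Type*} [SeminormedAddCommGroup E] (x : E) :
    ENNReal.ofReal (‖x‖ ^ 2) = ‖x‖ₑ ^ 2 := by
  rw [ENNReal.ofReal_pow (norm_nonneg x), ofReal_norm]

lemma sq_lintegral_le_measure_univ_mul {α : Type*} [MeasurableSpace α] (μ : Measure α)
    {f : α → ℝ≥0∞} (hf : AEMeasurable f μ) :
    (∫⁻ a, f a ∂μ) ^ 2 ≤ μ univ * ∫⁻ a, f a ^ 2 ∂μ := by
  have sq_rpow_half : ∀ x : ℝ≥0∞, (x ^ (1 / 2 : ℝ)) ^ 2 = x := fun x => by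
    rw [← ENNReal.rpow_natCast, ← ENNReal.rpow_mul]; norm_num
  have rpow_half_sq : ∀ x : ℝ≥0∞, (x ^ 2) ^ (1 / 2 : ℝ) = x := fun x => by
    rw [← ENNReal.rpow_natCast, ← ENNReal.rpow_mul]; norm_num
  have holder : ∫⁻ a, f a ∂μ ≤ μ univ ^ (1 / 2 : ℝ) * (∫⁻ a, f a ^ 2 ∂μ) ^ (1 / 2 : ℝ) := by
    have := ENNReal.lintegral_mul_norm_pow_le (μ := μ) (f := fun _ => 1) aemeasurable_const
      (hf.pow_const 2) (p := 1 / 2) (q := 1 / 2) (by norm_num) (by norm_num) (by norm_num)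
    simp only [ENNReal.one_rpow, one_mul, rpow_half_sq, lintegral_const] at this
    simpa using this
  calc (∫⁻ a, f a ∂μ) ^ 2
      ≤ (μ univ ^ (1 / 2 : ℝ) * (∫⁻ a, f a ^ 2 ∂μ) ^ (1 / 2 : ℝ)) ^ 2 := pow_le_pow_left' holder 2
    _ = μ univ * ∫⁻ a, f a ^ 2 ∂μ := by rw [mul_pow, sq_rpow_half, sq_rpow_half]

lemma setLIntegral_Ici_comp_sub (f : ℝ → ℝ≥0∞) (t : ℝ) :
    ∫⁻ τ in Ici t, f (τ - t) = ∫⁻ x in Ici 0, f x := by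
  have := (measurePreserving_sub_right volume t).setLIntegral_comp_preimage_emb
    (measurableEmbedding_subRight t) f (Ici 0)
  rwa [preimage_sub_const_Ici, zero_add] at this

section HalfLineKernel

variable {k g : ℝ → ℝ≥0∞}

lemma sq_setLIntegral_Ici_kernel_le (hk : Measurable k)
    (hg : AEMeasurable g (volume.restrict (Ici 0))) {t : ℝ} (ht : 0 ≤ t) :
    (∫⁻ τ in Ici t, k (τ - t) * g τ) ^ 2 ≤
      (∫⁻ x in Ici 0, k x) * ∫⁻ τ in Ici t, k (τ - t) * g τ ^ 2 := by
  have hkt : Measurable fun τ => k (τ - t) := hk.comp (measurable_sub_const t)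
  have hgt : AEMeasurable g (volume.restrict (Ici t)) :=
    hg.mono_measure (Measure.restrict_mono (Ici_subset_Ici.2 ht) le_rfl)
  have := sq_lintegral_le_measure_univ_mul
    ((volume.restrict (Ici t)).withDensity fun τ => k (τ - t))
    (hgt.mono_ac (withDensity_absolutelyContinuous _ _))
  rwa [withDensity_apply _ MeasurableSet.univ, Measure.restrict_univ, setLIntegral_Ici_comp_sub,
    lintegral_withDensity_eq_lintegral_mul₀ hkt.aemeasurable hgt,
    lintegral_withDensity_eq_lintegral_mul₀ hkt.aemeasurable (hgt.pow_const 2)] at this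

lemma lintegral_Ici_setLIntegral_Ici_kernel_le (hk : Measurable k)
    (hg : AEMeasurable g (volume.restrict (Ici 0))) :
    ∫⁻ t in Ici 0, ∫⁻ τ in Ici t, k (τ - t) * g τ ≤
      (∫⁻ x in Ici 0, k x) * ∫⁻ τ in Ici 0, g τ := by
  obtain ⟨g', hg'm, hgg'⟩ : ∃ g', Measurable g' ∧ g =ᵐ[volume.restrict (Ici 0)] g' :=
    ⟨hg.mk g, hg.measurable_mk, hg.ae_eq_mk⟩
  have shift : ∀ t, 0 ≤ t →
      ∫⁻ τ in Ici t, k (τ - t) * g τ = ∫⁻ x in Ici 0, k x * g' (x + t) := by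
    intro t ht
    rw [← setLIntegral_Ici_comp_sub (fun x => k x * g' (x + t))]
    refine lintegral_congr_ae ?_
    filter_upwards [hgg'.filter_mono
      (ae_mono (Measure.restrict_mono (Ici_subset_Ici.2 ht) le_rfl))] with τ hτ
    simp [hτ]
  calc ∫⁻ t in Ici 0, ∫⁻ τ in Ici t, k (τ - t) * g τ
      = ∫⁻ t in Ici 0, ∫⁻ x in Ici 0, k x * g' (x + t) :=
        setLIntegral_congr_fun measurableSet_Ici shift
    _ = ∫⁻ x in Ici 0, k x * ∫⁻ t in Ici 0, g' (x + t) := by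
        rw [lintegral_lintegral_swap ((hk.comp measurable_snd).mul
          (hg'm.comp (measurable_snd.add measurable_fst))).aemeasurable]
        exact lintegral_congr fun x => lintegral_const_mul _ (hg'm.comp (measurable_const_add x))
    _ ≤ ∫⁻ x in Ici 0, k x * ∫⁻ τ in Ici 0, g τ := by
        refine setLIntegral_mono' measurableSet_Ici fun x hx => mul_le_mul_right ?_ _
        calc ∫⁻ t in Ici 0, g' (x + t) = ∫⁻ τ in Ici x, g' τ := by
              simpa using (setLIntegral_Ici_comp_sub (fun y => g' (x + y)) x).symm
          _ ≤ ∫⁻ τ in Ici 0, g' τ := lintegral_mono_set (Ici_subset_Ici.2 hx)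
          _ = ∫⁻ τ in Ici 0, g τ := lintegral_congr_ae hgg'.symm
    _ = (∫⁻ x in Ici 0, k x) * ∫⁻ τ in Ici 0, g τ := lintegral_mul_const _ hk

lemma lintegral_Ici_sq_setLIntegral_Ici_kernel_le (hk : Measurable k)
    (hK : ∫⁻ x in Ici 0, k x ≠ ⊤) (hg : AEMeasurable g (volume.restrict (Ici 0))) :
    ∫⁻ t in Ici 0, (∫⁻ τ in Ici t, k (τ - t) * g τ) ^ 2 ≤
      (∫⁻ x in Ici 0, k x) ^ 2 * ∫⁻ τ in Ici 0, g τ ^ 2 := by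
  calc ∫⁻ t in Ici 0, (∫⁻ τ in Ici t, k (τ - t) * g τ) ^ 2
      ≤ ∫⁻ t in Ici 0, (∫⁻ x in Ici 0, k x) * ∫⁻ τ in Ici t, k (τ - t) * g τ ^ 2 :=
        setLIntegral_mono' measurableSet_Ici fun t ht => sq_setLIntegral_Ici_kernel_le hk hg ht
    _ = (∫⁻ x in Ici 0, k x) * ∫⁻ t in Ici 0, ∫⁻ τ in Ici t, k (τ - t) * g τ ^ 2 :=
        lintegral_const_mul' _ _ hK
    _ ≤ (∫⁻ x in Ici 0, k x) * ((∫⁻ x in Ici 0, k x) * ∫⁻ τ in Ici 0, g τ ^ 2) :=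
        mul_le_mul_right (lintegral_Ici_setLIntegral_Ici_kernel_le hk (hg.pow_const 2)) _
    _ = (∫⁻ x in Ici 0, k x) ^ 2 * ∫⁻ τ in Ici 0, g τ ^ 2 := by ring

lemma setLIntegral_Ici_kernel_lt_top (hk : Measurable k) (hk_le : ∀ x, 0 ≤ x → k x ≤ 1)
    (hK : ∫⁻ x in Ici 0, k x ≠ ⊤) (hg : AEMeasurable g (volume.restrict (Ici 0)))
    (hg2 : ∫⁻ τ in Ici 0, g τ ^ 2 ≠ ⊤) {t : ℝ} (ht : 0 ≤ t) :
    ∫⁻ τ in Ici t, k (τ - t) * g τ < ⊤ := by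
  have bound : ∫⁻ τ in Ici t, k (τ - t) * g τ ^ 2 ≤ ∫⁻ τ in Ici 0, g τ ^ 2 :=
    calc ∫⁻ τ in Ici t, k (τ - t) * g τ ^ 2 ≤ ∫⁻ τ in Ici t, g τ ^ 2 :=
          setLIntegral_mono' measurableSet_Ici fun τ hτ =>
            mul_le_of_le_one_left' (hk_le _ (sub_nonneg.2 hτ))
      _ ≤ ∫⁻ τ in Ici 0, g τ ^ 2 := lintegral_mono_set (Ici_subset_Ici.2 ht)
  have : (∫⁻ τ in Ici t, k (τ - t) * g τ) ^ 2 < ⊤ :=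
    ((sq_setLIntegral_Ici_kernel_le hk hg ht).trans (mul_le_mul_right bound _)).trans_lt
      (ENNReal.mul_lt_top hK.lt_top hg2.lt_top)
  simpa using this

end HalfLineKernel

lemma lintegral_Ici_ofReal_exp_neg_mul_ne_top {lam : ℝ} (hlam : 0 < lam) :
    ∫⁻ x in Ici 0, ENNReal.ofReal (Real.exp (-lam * x)) ≠ ⊤ :=
  ((integrableOn_Ici_iff_integrableOn_Ioi).2 (exp_neg_integrableOn_Ioi 0 hlam)).lintegral_lt_top.ne

lemma ContinuousOn.hasDerivWithinAt_setIntegral_Ici {E : Type*} [NormedAddCommGroup E]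
    [NormedSpace ℝ E] [CompleteSpace E] {f : ℝ → E} {a t : ℝ} (hf : ContinuousOn f (Ici a))
    (hint : IntegrableOn f (Ici a)) (ht : a ≤ t) :
    HasDerivWithinAt (fun u => ∫ x in Ici u, f x) (-f t) (Ici a) t := by
  have : Fact (t ∈ Icc a (t + 1)) := ⟨⟨ht, by linarith⟩⟩
  have hfI : ContinuousOn f (Icc a (t + 1)) := hf.mono Icc_subset_Ici_self
  have ftc : HasDerivWithinAt (fun u => ∫ x in a..u, f x) (f t) (Icc a (t + 1)) t :=
    intervalIntegral.integral_hasDerivWithinAt_right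
      (hf.mono (by simpa [uIcc_of_le ht] using Icc_subset_Ici_self)).intervalIntegrable
      (hfI.stronglyMeasurableAtFilter_nhdsWithin measurableSet_Icc t) (hfI _ Fact.out)
  have hnhds : Icc a (t + 1) ∈ nhdsWithin t (Ici a) := by
    rw [← Ici_inter_Iic]
    exact inter_mem_nhdsWithin _ (Iic_mem_nhds (by linarith))
  refine ((ftc.const_sub (∫ x in Ici a, f x)).mono_of_mem_nhdsWithin hnhds).congr
    (fun u hu => ?_) ?_ <;>
  rw [← intervalIntegral.integral_Ici_sub_Ici' hint (hint.mono_set (Ici_subset_Ici.2 ‹_›)),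
    sub_sub_cancel]

namespace Matrix

variable {ι : Type*} [Fintype ι]

noncomputable def mulVecCLM (ι : Type*) [Fintype ι] :
    Matrix ι ι ℝ →L[ℝ] (ι → ℝ) →L[ℝ] ι → ℝ :=
  LinearMap.toContinuousLinearMap
    (LinearMap.toContinuousLinearMap.toLinearMap ∘ₗ mulVecBilin ℝ ℝ)

variable [DecidableEq ι]

lemma continuousOn_exp_smul_mulVec (A : Matrix ι ι ℝ) {g : ℝ → ℝ} (hg : Continuous g)
    {h : ℝ → ι → ℝ} {s : Set ℝ} (hh : ContinuousOn h s) :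
    ContinuousOn (fun τ => NormedSpace.exp (g τ • A) *ᵥ h τ) s := by
  have hE : Continuous fun τ => NormedSpace.exp (g τ • A) :=
    NormedSpace.exp_continuous.comp (by fun_prop)
  exact (continuous_fst.matrix_mulVec continuous_snd).comp_continuousOn (hE.continuousOn.prodMk hh)

lemma hasDerivWithinAt_setIntegral_Ici_exp_mulVec (A : Matrix ι ι ℝ) {h : ℝ → ι → ℝ}
    {a t : ℝ} (hcont : ContinuousOn h (Ici a))
    (hint : IntegrableOn (fun τ : ℝ => NormedSpace.exp (τ • A) *ᵥ h τ) (Ici a)) (ht : a ≤ t) :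
    HasDerivWithinAt (fun u => ∫ τ in Ici u, NormedSpace.exp ((τ - u) • A) *ᵥ h τ)
      (-(A *ᵥ ∫ τ in Ici t, NormedSpace.exp ((τ - t) • A) *ᵥ h τ) - h t) (Ici a) t := by
  let f := fun τ : ℝ => NormedSpace.exp (τ • A) *ᵥ h τ
  have factor : ∀ u τ : ℝ,
      NormedSpace.exp ((τ - u) • A) = NormedSpace.exp (u • -A) * NormedSpace.exp (τ • A) := by
    intro u τ
    rw [← exp_add_of_commute _ _ (((Commute.refl A).neg_left.smul_left u).smul_right τ)]
    congr 1
    module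
  have tail : ∀ u ∈ Ici a, ∫ τ in Ici u, NormedSpace.exp ((τ - u) • A) *ᵥ h τ =
      mulVecCLM ι (NormedSpace.exp (u • -A)) (∫ τ in Ici u, f τ) := by
    intro u hu
    simp_rw [factor, ← mulVec_mulVec]
    exact (mulVecCLM ι _).integral_comp_comm (hint.mono_set (Ici_subset_Ici.2 hu))
  have := (mulVecCLM ι).hasDerivWithinAt_of_bilinear
    (hasDerivAt_exp_smul_const' (-A) t).hasDerivWithinAt
    ((continuousOn_exp_smul_mulVec A continuous_id hcont).hasDerivWithinAt_setIntegral_Ici hint ht)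
  refine (this.congr tail (tail t ht)).congr_deriv ?_
  have inv : NormedSpace.exp (t • -A) * NormedSpace.exp (t • A) = 1 := by
    rw [← factor, sub_self, zero_smul, NormedSpace.exp_zero]
  rw [tail t ht]
  show NormedSpace.exp (t • -A) *ᵥ -f t + (-A * NormedSpace.exp (t • -A)) *ᵥ ∫ τ in Ici t, f τ =
    -(A *ᵥ NormedSpace.exp (t • -A) *ᵥ ∫ τ in Ici t, f τ) - h t
  simp only [f, mulVec_neg, neg_mul, neg_mulVec, mulVec_mulVec, inv, one_mulVec]
  abel

lemma norm_exp_smul_transpose_le {M : Matrix ι ι ℝ} {c lam : ℝ}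
    (hstab : ∀ t : ℝ, 0 ≤ t → ‖NormedSpace.exp (t • M)‖ ≤ c * Real.exp (-lam * t))
    {u : ℝ} (hu : 0 ≤ u) :
    ‖NormedSpace.exp (u • Mᵀ)‖ ≤ Fintype.card ι * c * Real.exp (-lam * u) := by
  rw [← transpose_smul, exp_transpose, mul_assoc]
  exact (linfty_opNorm_transpose_le _).trans (by gcongr; exact hstab u hu)

variable {A : Matrix ι ι ℝ} {C lam : ℝ} {h : ℝ → ι → ℝ}

lemma enorm_exp_smul_mulVec_le
    (hA : ∀ u : ℝ, 0 ≤ u → ‖NormedSpace.exp (u • A)‖ ≤ C * Real.exp (-lam * u))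
    {u : ℝ} (hu : 0 ≤ u) (v : ι → ℝ) :
    ‖NormedSpace.exp (u • A) *ᵥ v‖ₑ ≤
      ENNReal.ofReal C * (ENNReal.ofReal (Real.exp (-lam * u)) * ‖v‖ₑ) := by
  rw [← ofReal_norm, ← ofReal_norm, ← ENNReal.ofReal_mul (Real.exp_pos _).le,
    ← ENNReal.ofReal_mul' (by positivity), ← mul_assoc]
  exact ENNReal.ofReal_le_ofReal ((linfty_opNorm_mulVec _ _).trans
    (mul_le_mul_of_nonneg_right (hA u hu) (norm_nonneg v)))

lemma setLIntegral_enorm_exp_sub_smul_mulVec_le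
    (hA : ∀ u : ℝ, 0 ≤ u → ‖NormedSpace.exp (u • A)‖ ≤ C * Real.exp (-lam * u)) (t : ℝ) :
    ∫⁻ τ in Ici t, ‖NormedSpace.exp ((τ - t) • A) *ᵥ h τ‖ₑ ≤
      ENNReal.ofReal C * ∫⁻ τ in Ici t, ENNReal.ofReal (Real.exp (-lam * (τ - t))) * ‖h τ‖ₑ :=
  (setLIntegral_mono' measurableSet_Ici fun τ hτ =>
    enorm_exp_smul_mulVec_le hA (sub_nonneg.2 hτ) (h τ)).trans_eq
    (lintegral_const_mul' _ _ ENNReal.ofReal_ne_top)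

lemma integrableOn_exp_sub_smul_mulVec
    (hA : ∀ u : ℝ, 0 ≤ u → ‖NormedSpace.exp (u • A)‖ ≤ C * Real.exp (-lam * u))
    (hlam : 0 < lam) (hcont : ContinuousOn h (Ici 0))
    (hl2 : ∫⁻ t in Ici 0, ENNReal.ofReal (‖h t‖ ^ 2) < ⊤) {t : ℝ} (ht : 0 ≤ t) :
    IntegrableOn (fun τ => NormedSpace.exp ((τ - t) • A) *ᵥ h τ) (Ici t) := by
  refine ⟨(continuousOn_exp_smul_mulVec A (continuous_id.sub continuous_const)
    (hcont.mono (Ici_subset_Ici.2 ht))).aestronglyMeasurable measurableSet_Ici, ?_⟩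
  refine (setLIntegral_enorm_exp_sub_smul_mulVec_le hA t).trans_lt
    (ENNReal.mul_lt_top ENNReal.ofReal_lt_top ?_)
  exact setLIntegral_Ici_kernel_lt_top (by fun_prop)
    (fun x hx => ENNReal.ofReal_le_one.2 (Real.exp_le_one_iff.2 (by nlinarith)))
    (lintegral_Ici_ofReal_exp_neg_mul_ne_top hlam)
    (hcont.aestronglyMeasurable measurableSet_Ici).enorm
    (by simpa only [ofReal_sq_norm] using hl2.ne) ht

lemma lintegral_sq_norm_setIntegral_exp_sub_smul_mulVec_lt_top
    (hA : ∀ u : ℝ, 0 ≤ u → ‖NormedSpace.exp (u • A)‖ ≤ C * Real.exp (-lam * u))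
    (hlam : 0 < lam) (hcont : ContinuousOn h (Ici 0))
    (hl2 : ∫⁻ t in Ici 0, ENNReal.ofReal (‖h t‖ ^ 2) < ⊤) :
    ∫⁻ t in Ici 0, ENNReal.ofReal (‖∫ τ in Ici t, NormedSpace.exp ((τ - t) • A) *ᵥ h τ‖ ^ 2)
      < ⊤ := by
  set K := ∫⁻ x in Ici 0, ENNReal.ofReal (Real.exp (-lam * x))
  set Φ := fun t => ∫⁻ τ in Ici t, ENNReal.ofReal (Real.exp (-lam * (τ - t))) * ‖h τ‖ₑ
  have pointwise : ∀ t,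
      ENNReal.ofReal (‖∫ τ in Ici t, NormedSpace.exp ((τ - t) • A) *ᵥ h τ‖ ^ 2) ≤
        ENNReal.ofReal C ^ 2 * Φ t ^ 2 := fun t => by
    rw [ofReal_sq_norm, ← mul_pow]
    exact pow_le_pow_left' ((enorm_integral_le_lintegral_enorm _).trans
      (setLIntegral_enorm_exp_sub_smul_mulVec_le hA t)) 2
  have hK : K ≠ ⊤ := lintegral_Ici_ofReal_exp_neg_mul_ne_top hlam
  calc ∫⁻ t in Ici 0, ENNReal.ofReal (‖∫ τ in Ici t, NormedSpace.exp ((τ - t) • A) *ᵥ h τ‖ ^ 2)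
      ≤ ∫⁻ t in Ici 0, ENNReal.ofReal C ^ 2 * Φ t ^ 2 := lintegral_mono pointwise
    _ = ENNReal.ofReal C ^ 2 * ∫⁻ t in Ici 0, Φ t ^ 2 := lintegral_const_mul' _ _ (by simp)
    _ ≤ ENNReal.ofReal C ^ 2 * (K ^ 2 * ∫⁻ τ in Ici 0, ‖h τ‖ₑ ^ 2) :=
        mul_le_mul_right (lintegral_Ici_sq_setLIntegral_Ici_kernel_le (by fun_prop) hK
          (hcont.aestronglyMeasurable measurableSet_Ici).enorm) _
    _ < ⊤ := by
        simp_rw [← ofReal_sq_norm]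
        finiteness

end Matrix

theorem backward_adjoint_equation_solution_general
    {n : ℕ} (M : Matrix (Fin n) (Fin n) ℝ)
    (c lam : ℝ) (hlam : 0 < lam)
    (hstab : ∀ t : ℝ, 0 ≤ t →
      ‖NormedSpace.exp (t • M)‖ ≤ c * Real.exp (-lam * t))
    (h : ℝ → Fin n → ℝ) (hcont : ContinuousOn h (Set.Ici (0 : ℝ)))
    (hl2 : ∫⁻ t in Set.Ici (0 : ℝ), ENNReal.ofReal (‖h t‖ ^ 2) < ⊤)
    (s : ℝ → Fin n → ℝ)
    (hs : ∀ t : ℝ,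
      s t = ∫ τ in Set.Ici t, NormedSpace.exp ((τ - t) • Mᵀ) *ᵥ h τ) :
    (∀ t : ℝ, 0 ≤ t →
        IntegrableOn (fun τ => NormedSpace.exp ((τ - t) • Mᵀ) *ᵥ h τ)
          (Set.Ici t)) ∧
      (∫⁻ t in Set.Ici (0 : ℝ), ENNReal.ofReal (‖s t‖ ^ 2) < ⊤) ∧
      (∀ t : ℝ, 0 ≤ t →
        HasDerivWithinAt s (-(Mᵀ *ᵥ s t) - h t) (Set.Ici (0 : ℝ)) t) := by
  have hA : ∀ u : ℝ, 0 ≤ u →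
      ‖NormedSpace.exp (u • Mᵀ)‖ ≤ Fintype.card (Fin n) * c * Real.exp (-lam * u) :=
    fun u hu => norm_exp_smul_transpose_le hstab hu
  have hint := fun t (ht : 0 ≤ t) => integrableOn_exp_sub_smul_mulVec hA hlam hcont hl2 ht
  obtain rfl : s = fun t => ∫ τ in Ici t, NormedSpace.exp ((τ - t) • Mᵀ) *ᵥ h τ := funext hs
  refine ⟨hint, lintegral_sq_norm_setIntegral_exp_sub_smul_mulVec_lt_top hA hlam hcont hl2,
    fun t ht => ?_⟩
  exact hasDerivWithinAt_setIntegral_Ici_exp_mulVec Mᵀ hcont (by simpa using hint 0 le_rfl) ht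

/-- Lemma 2(iii) of the paper: with `M` exponentially stable and `h` continuous and
square-integrable on `[0, ∞)`, the formula `s(t) = ∫_t^∞ e^{(τ−t)Mᵀ} h(τ) dτ` is an
absolutely convergent integral defining a square-integrable solution of the backward
equation `ṡ + Mᵀ s + h = 0` on `[0, ∞)`. -/
theorem backward_adjoint_equation_solution
    {n : ℕ} (M : Matrix (Fin n) (Fin n) ℝ)
    (c lam : ℝ) (hc : 0 < c) (hlam : 0 < lam)
    (hstab : ∀ t : ℝ, 0 ≤ t →
      ‖NormedSpace.exp (t • M)‖ ≤ c * Real.exp (-lam * t))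
    (h : ℝ → Fin n → ℝ) (hcont : ContinuousOn h (Set.Ici (0 : ℝ)))
    (hl2 : ∫⁻ t in Set.Ici (0 : ℝ), ENNReal.ofReal (‖h t‖ ^ 2) < ⊤)
    (s : ℝ → Fin n → ℝ)
    (hs : ∀ t : ℝ,
      s t = ∫ τ in Set.Ici t, NormedSpace.exp ((τ - t) • Mᵀ) *ᵥ h τ) :
    (∀ t : ℝ, 0 ≤ t →
        IntegrableOn (fun τ => NormedSpace.exp ((τ - t) • Mᵀ) *ᵥ h τ)
          (Set.Ici t)) ∧
      (∫⁻ t in Set.Ici (0 : ℝ), ENNReal.ofReal (‖s t‖ ^ 2) < ⊤) ∧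
      (∀ t : ℝ, 0 ≤ t →
        HasDerivWithinAt s (-(Mᵀ *ᵥ s t) - h t) (Set.Ici (0 : ℝ)) t) :=
  backward_adjoint_equation_solution_general M c lam hlam hstab h hcont hl2 s hs
end
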